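/- There exists a constant C > 0 such that for every integer d ≥ 1, every nonempty finite downward closed set Λ ⊂ ℕ₀^d, and every real polynomial p in the downward closed polynomial space P_Λ, there exists a σ₂-network Φ with input dimension d, output dimension 1, at most ∑_{i=1}^{d} ⌊log₂ N_i⌋ + d hidden layers (where N_i = max_{α ∈ Λ} α_i, with the convention ⌊log₂ 0⌋ = 0), at most C·|Λ| neurons, and at most C·|Λ| nonzero weights, whose realization satisfies R(Φ)(x) = p(x) for all x ∈ ℝ^d. -/

import Mathlib

open scoped Classical

noncomputable section

/-- Chebyshev polynomials of the first kind, as functions `ℝ → ℝ`: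
`T 0 x = 1`, `T 1 x = x`, `T (n+2) x = 2x * T (n+1) x - T n x`. -/
def chebT : ℕ → ℝ → ℝ
  | 0, _ => 1
  | 1, x => x
  | n + 2, x => 2 * x * chebT (n + 1) x - chebT n x

/-- Rectified power unit `σ_s(x) = max(0,x)^s`. -/
def repu (s : ℕ) (x : ℝ) : ℝ := (max 0 x) ^ s

/-- A feed-forward neural network with `L` layers: layer widths `width 0, …, width L`
(`width 0` is the input dimension, `width L` the output dimension), weight matrices
`A k` and bias vectors `b k` for `k = 1, …, L` (entries outside the relevant ranges
are irrelevant). -/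
structure Net where
  L : ℕ
  width : ℕ → ℕ
  A : ℕ → ℕ → ℕ → ℝ
  b : ℕ → ℕ → ℝ

namespace Net

/-- The state `x_k` of the network on input `x` with activation `σ`:
`x_0 = x`, `x_{k+1} = σ(A_{k+1} x_k + b_{k+1})` componentwise. -/
def fwd (σ : ℝ → ℝ) (Φ : Net) (x : ℕ → ℝ) : ℕ → ℕ → ℝ
  | 0 => x
  | k + 1 => fun i =>
      σ ((∑ j ∈ Finset.range (Φ.width k), Φ.A (k + 1) i j * Φ.fwd σ x k j) + Φ.b (k + 1) i)

/-- The realization `R(Φ)(x) = A_L x_{L-1} + b_L` (no activation on the last layer). -/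
def realize (σ : ℝ → ℝ) (Φ : Net) (x : ℕ → ℝ) : ℕ → ℝ := fun i =>
  (∑ j ∈ Finset.range (Φ.width (Φ.L - 1)), Φ.A Φ.L i j * Φ.fwd σ x (Φ.L - 1) j) + Φ.b Φ.L i

/-- Number of hidden layers. -/
def hiddenLayers (Φ : Net) : ℕ := Φ.L - 1

/-- Number of neurons (activation functions): total width of the hidden layers. -/
def neurons (Φ : Net) : ℕ := ∑ k ∈ Finset.Ico 1 Φ.L, Φ.width k

/-- Number of nonzero weights: nonzero entries of all the `A_k` and `b_k`. -/
def nonzeroWeights (Φ : Net) : ℕ :=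
  ∑ k ∈ Finset.Icc 1 Φ.L,
    ((((Finset.range (Φ.width k)) ×ˢ (Finset.range (Φ.width (k - 1)))).filter
        (fun p => Φ.A k p.1 p.2 ≠ 0)).card
      + ((Finset.range (Φ.width k)).filter (fun i => Φ.b k i ≠ 0)).card)

end Net

/-! Write `|α|` for the total degree of a multi-index. Every `α` with `|α| ≥ 2` splits as
`α = α₁ + α₂` with `|α₁| = ⌈|α|/2⌉` and `|α₂| = ⌊|α|/2⌋`, so `x ^ α` can be formed in layer
`⌈log₂ |α|⌉` as a product of two monomials of the previous layers; by downward closedness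
these lie in `Λ` again, and `⌈log₂ |α|⌉ ≤ ∑ᵢ (⌊log₂ Nᵢ⌋ + 1)`. A product costs four
σ₂-neurons, as `ab = ((a+b)² - (a-b)²)/4` and `t² = σ₂(t) + σ₂(-t)`. Each monomial of `Λ`
occupies at most two layers (it is relayed once, as `⌊|α|/2⌋` may lie one level below
`⌈|α|/2⌉`), and one more neuron per layer accumulates the part of `p` computed so far.
Every neuron but the accumulators reads two inputs, so neurons and weights are `O(|Λ|)`;
the depth is at most `|Λ|` because `Λ` contains a chain of length `|α| + 1` below each `α`. -/

open Finset

lemma repu_two_add_repu_two_neg (a : ℝ) : repu 2 a + repu 2 (-a) = a ^ 2 := by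
  rcases le_total a 0 with h | h
  · simp [repu, max_eq_left h, max_eq_right (neg_nonneg.mpr h)]
  · simp [repu, max_eq_right h, max_eq_left (neg_nonpos.mpr h)]

lemma sum_range_mul_eq_sum_sum {M : Type*} [AddCommMonoid M] (k n : ℕ) (f : ℕ → M) :
    ∑ j ∈ range (k * n), f j = ∑ m ∈ range n, ∑ v ∈ range k, f (k * m + v) := by
  induction n with
  | zero => simp
  | succ n ih => rw [Nat.mul_succ, sum_range_add, ih, sum_range_succ]

/- The product neuron `m` becomes the σ₂-neurons `j = 4m, …, 4m+3` computing
`σ₂(outerSign j * (a + innerSign j * b))`, i.e. `σ₂(±(a+b))` and `σ₂(±(a-b))`. -/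
def outerSign (j : ℕ) : ℝ := (-1) ^ j

def innerSign (j : ℕ) : ℝ := (-1) ^ (j / 2)

lemma sum_range_four_gadget (n : ℕ) (c a b : ℕ → ℝ) :
    ∑ j ∈ range (4 * n),
        c (j / 4) * (innerSign j / 4) *
          repu 2 (outerSign j * (a (j / 4) + innerSign j * b (j / 4))) =
      ∑ m ∈ range n, c m * (a m * b m) := by
  rw [sum_range_mul_eq_sum_sum]
  refine sum_congr rfl fun m _ => ?_
  have houter : ∀ v, outerSign (4 * m + v) = outerSign v := fun v => by
    simp [outerSign, pow_add, pow_mul, show ((-1 : ℝ) ^ 4) = 1 by norm_num]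
  have hinner : ∀ v, innerSign (4 * m + v) = innerSign v := fun v => by
    rw [innerSign, innerSign, show (4 * m + v) / 2 = 2 * m + v / 2 by omega]
    simp [pow_add, pow_mul]
  simp only [sum_range_succ, sum_range_zero, zero_add, houter, hinner,
    Nat.mul_add_div (by norm_num : 0 < 4)]
  have hsum := repu_two_add_repu_two_neg (a m + b m)
  have hdiff := repu_two_add_repu_two_neg (a m - b m)
  norm_num [outerSign, innerSign, ← sub_eq_add_neg] at hsum hdiff ⊢
  linear_combination (c m / 4) * hsum - (c m / 4) * hdiff

def affEval (n : ℕ) (v : ℕ → ℝ) : ((ℕ → ℝ) × ℝ) →ₗ[ℝ] ℝ where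
  toFun f := ∑ j ∈ range n, f.1 j * v j + f.2
  map_add' f g := by
    simp only [Prod.fst_add, Prod.snd_add, Pi.add_apply, add_mul, sum_add_distrib]; ring
  map_smul' c f := by
    simp only [Prod.smul_fst, Prod.smul_snd, Pi.smul_apply, smul_eq_mul, RingHom.id_apply,
      mul_add, mul_sum, mul_assoc]

lemma affEval_single {n i : ℕ} (h : i < n) (v : ℕ → ℝ) :
    affEval n v (Pi.single i 1, 0) = v i := by
  simp [affEval, Pi.single_apply, h]

lemma affEval_const (n : ℕ) (v : ℕ → ℝ) : affEval n v (0, 1) = 1 := by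
  simp [affEval]

def nnz (n : ℕ) (c : ℕ → ℝ) : ℕ := #{j ∈ range n | c j ≠ 0}

lemma nnz_add_le (n : ℕ) (c c' : ℕ → ℝ) : nnz n (c + c') ≤ nnz n c + nnz n c' := by
  refine (card_le_card fun j hj => ?_).trans (card_union_le _ _)
  simp only [mem_filter, mem_union, Pi.add_apply] at hj ⊢
  by_contra! h
  exact hj.2 (by rw [h.1 hj.1, h.2 hj.1, add_zero])

lemma nnz_smul_le (n : ℕ) (a : ℝ) (c : ℕ → ℝ) : nnz n (a • c) ≤ nnz n c :=
  card_le_card <| monotone_filter_right _ fun j _ h => by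
    simp only [Pi.smul_apply, smul_eq_mul] at h; exact right_ne_zero_of_mul h

lemma nnz_sum_le {ι : Type*} (n : ℕ) (s : Finset ι) (c : ι → ℕ → ℝ) :
    nnz n (∑ i ∈ s, c i) ≤ ∑ i ∈ s, nnz n (c i) := by
  induction s using Finset.induction with
  | empty => simp [nnz]
  | insert i s hi ih =>
    rw [sum_insert hi, sum_insert hi]
    exact (nnz_add_le n _ _).trans (Nat.add_le_add_left ih _)

lemma nnz_single_le (n i : ℕ) (a : ℝ) : nnz n (Pi.single i a) ≤ 1 :=
  (card_le_card fun j hj => by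
    by_contra h
    exact (mem_filter.mp hj).2 (by simp [show j ≠ i by simpa using h])).trans
    (card_singleton i).le

lemma card_filter_ne_zero_product (a b : ℕ) (M : ℕ → ℕ → ℝ) :
    #{q ∈ range a ×ˢ range b | M q.1 q.2 ≠ 0} = ∑ i ∈ range a, nnz b (M i) := by
  simp only [nnz, card_filter, sum_product]

/-- Neuron `m` of layer `ℓ + 1` is the product of the affine forms `left ℓ m` and `right ℓ m`
of layer `ℓ`; layer `0` is the input. -/
structure ProdNet where
  depth : ℕ
  width : ℕ → ℕ
  left : ℕ → ℕ → (ℕ → ℝ) × ℝ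
  right : ℕ → ℕ → (ℕ → ℝ) × ℝ
  out : (ℕ → ℝ) × ℝ

namespace ProdNet

variable (P : ProdNet)

def val (x : ℕ → ℝ) : ℕ → ℕ → ℝ
  | 0 => x
  | ℓ + 1 => fun m =>
      affEval (P.width ℓ) (val x ℓ) (P.left ℓ m) * affEval (P.width ℓ) (val x ℓ) (P.right ℓ m)

lemma val_succ (x : ℕ → ℝ) (ℓ m : ℕ) :
    P.val x (ℓ + 1) m =
      affEval (P.width ℓ) (P.val x ℓ) (P.left ℓ m) *
        affEval (P.width ℓ) (P.val x ℓ) (P.right ℓ m) :=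
  rfl

def res (x : ℕ → ℝ) : ℝ := affEval (P.width P.depth) (P.val x P.depth) P.out

def factorWeights (ℓ : ℕ) : ℕ :=
  ∑ m ∈ range (P.width (ℓ + 1)), (nnz (P.width ℓ) (P.left ℓ m).1 + nnz (P.width ℓ) (P.right ℓ m).1)

def mix (ℓ i : ℕ) : (ℕ → ℝ) × ℝ := P.left ℓ (i / 4) + innerSign i • P.right ℓ (i / 4)

/-- Coefficients on the σ₂-neurons of layer `ℓ` reading off `∑ₘ c m * val ℓ m`. -/
def lift (ℓ : ℕ) (c : ℕ → ℝ) : ℕ → ℝ :=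
  if ℓ = 0 then c else fun j => c (j / 4) * (innerSign j / 4)

def netWidth (k : ℕ) : ℕ := if k = 0 then P.width 0 else if k ≤ P.depth then 4 * P.width k else 1

def toNet : Net where
  L := P.depth + 1
  width := P.netWidth
  A k i j :=
    if k ≤ P.depth then outerSign i * lift (k - 1) (P.mix (k - 1) i).1 j
    else lift P.depth P.out.1 j
  b k i := if k ≤ P.depth then outerSign i * (P.mix (k - 1) i).2 else P.out.2

lemma netWidth_of_pos {k : ℕ} (h0 : k ≠ 0) (hk : k ≤ P.depth) : P.netWidth k = 4 * P.width k := by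
  simp [netWidth, h0, hk]

lemma fwd_succ {x : ℕ → ℝ} {k : ℕ} (hk : k < P.depth)
    (hread : ∀ c, ∑ j ∈ range (P.netWidth k), lift k c j * P.toNet.fwd (repu 2) x k j =
      ∑ m ∈ range (P.width k), c m * P.val x k m) (i : ℕ) :
    P.toNet.fwd (repu 2) x (k + 1) i =
      repu 2 (outerSign i * affEval (P.width k) (P.val x k) (P.mix k i)) := by
  have hA : ∀ j, P.toNet.A (k + 1) i j = outerSign i * lift k (P.mix k i).1 j := fun j => by
    simp [toNet, show k + 1 ≤ P.depth by omega]
  have hb : P.toNet.b (k + 1) i = outerSign i * (P.mix k i).2 := by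
    simp [toNet, show k + 1 ≤ P.depth by omega]
  simp only [Net.fwd, hA, hb, mul_assoc, ← mul_sum]
  rw [show P.toNet.width k = P.netWidth k from rfl, hread, affEval, LinearMap.coe_mk,
    AddHom.coe_mk, mul_add]

lemma sum_lift_mul_fwd (x : ℕ → ℝ) {ℓ : ℕ} (hℓ : ℓ ≤ P.depth) (c : ℕ → ℝ) :
    ∑ j ∈ range (P.netWidth ℓ), lift ℓ c j * P.toNet.fwd (repu 2) x ℓ j =
      ∑ m ∈ range (P.width ℓ), c m * P.val x ℓ m := by
  induction ℓ generalizing c with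
  | zero => simp [lift, netWidth, Net.fwd, val]
  | succ k ih =>
    have hfwd := P.fwd_succ (x := x) (by omega) (ih (by omega))
    have hmix : ∀ i, affEval (P.width k) (P.val x k) (P.mix k i) =
        affEval (P.width k) (P.val x k) (P.left k (i / 4)) +
          innerSign i * affEval (P.width k) (P.val x k) (P.right k (i / 4)) := fun i => by
      simp [mix]
    simp only [P.netWidth_of_pos (Nat.succ_ne_zero k) hℓ, lift, Nat.succ_ne_zero, if_false,
      hfwd, hmix]
    exact sum_range_four_gadget (P.width (k + 1)) c
      (fun m => affEval (P.width k) (P.val x k) (P.left k m))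
      (fun m => affEval (P.width k) (P.val x k) (P.right k m))

lemma realize_toNet (x : ℕ → ℝ) : P.toNet.realize (repu 2) x 0 = P.res x := by
  have hA : ∀ j, P.toNet.A (P.depth + 1) 0 j = lift P.depth P.out.1 j := fun j => by
    simp [toNet]
  have hb : P.toNet.b (P.depth + 1) 0 = P.out.2 := by simp [toNet]
  simp only [Net.realize, show P.toNet.L = P.depth + 1 from rfl, Nat.add_sub_cancel, hA, hb]
  rw [show P.toNet.width P.depth = P.netWidth P.depth from rfl,
    P.sum_lift_mul_fwd x le_rfl]
  rfl

lemma hiddenLayers_toNet : P.toNet.hiddenLayers = P.depth := Nat.add_sub_cancel ..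

lemma width_zero_toNet : P.toNet.width 0 = P.width 0 := rfl

lemma width_L_toNet : P.toNet.width P.toNet.L = 1 := by simp [toNet, netWidth]

lemma neurons_toNet : P.toNet.neurons = ∑ k ∈ range P.depth, 4 * P.width (k + 1) := by
  rw [Net.neurons, show P.toNet.L = P.depth + 1 from rfl, sum_Ico_eq_sum_range]
  refine sum_congr (by simp) fun k hk => ?_
  rw [add_comm 1 k]
  exact P.netWidth_of_pos k.succ_ne_zero (by simp at hk; omega)

lemma nnz_lift_le {ℓ : ℕ} (hℓ : ℓ ≤ P.depth) (c : ℕ → ℝ) :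
    nnz (P.netWidth ℓ) (lift ℓ c) ≤ 4 * nnz (P.width ℓ) c := by
  rcases Nat.eq_zero_or_pos ℓ with rfl | hpos
  · simp only [lift, netWidth, if_true]; omega
  rw [P.netWidth_of_pos hpos.ne' hℓ]
  refine card_le_mul_card_image_of_maps_to (f := (· / 4)) (fun j hj => ?_) 4 fun m _ => ?_
  · simp only [lift, hpos.ne', if_false, mem_filter, mem_range] at hj ⊢
    exact ⟨by omega, left_ne_zero_of_mul hj.2⟩
  · calc _ ≤ #(Ico (4 * m) (4 * m + 4)) := card_le_card fun j hj => by
          simp only [mem_filter, mem_Ico] at hj ⊢; omega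
      _ = 4 := by simp

lemma nnz_A_toNet_le {k : ℕ} (hk : k < P.depth) (i : ℕ) :
    nnz (P.netWidth k) (P.toNet.A (k + 1) i) ≤
      4 * (nnz (P.width k) (P.left k (i / 4)).1 + nnz (P.width k) (P.right k (i / 4)).1) := by
  have hA : P.toNet.A (k + 1) i = outerSign i • lift k (P.mix k i).1 := by
    ext j; simp [toNet, show k + 1 ≤ P.depth by omega]
  rw [hA]
  refine (nnz_smul_le _ _ _).trans <| (P.nnz_lift_le hk.le _).trans ?_
  refine Nat.mul_le_mul_left 4 <| (nnz_add_le _ _ _).trans (Nat.add_le_add_left ?_ _)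
  exact nnz_smul_le _ _ _

lemma nonzeroWeights_toNet_le :
    P.toNet.nonzeroWeights ≤
      ∑ k ∈ range P.depth, (16 * P.factorWeights k + 4 * P.width (k + 1)) +
        (4 * nnz (P.width P.depth) P.out.1 + 1) := by
  rw [Net.nonzeroWeights, show P.toNet.L = P.depth + 1 from rfl, ← Ico_add_one_right_eq_Icc,
    sum_Ico_eq_sum_range, Nat.add_sub_cancel, sum_range_succ]
  simp only [add_comm 1, Nat.add_sub_cancel]
  refine add_le_add (sum_le_sum fun k hk => ?_) ?_
  · have hk : k < P.depth := mem_range.mp hk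
    have hwidth : P.toNet.width (k + 1) = 4 * P.width (k + 1) :=
      P.netWidth_of_pos k.succ_ne_zero hk
    rw [card_filter_ne_zero_product]
    refine add_le_add ?_ ((card_filter_le _ _).trans (by rw [card_range, hwidth]))
    calc ∑ i ∈ range (P.toNet.width (k + 1)), nnz (P.netWidth k) (P.toNet.A (k + 1) i)
        ≤ ∑ i ∈ range (4 * P.width (k + 1)), 4 *
            (nnz (P.width k) (P.left k (i / 4)).1 + nnz (P.width k) (P.right k (i / 4)).1) := by
          rw [hwidth]; exact sum_le_sum fun i _ => P.nnz_A_toNet_le hk i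
      _ = 16 * P.factorWeights k := by
          rw [sum_range_mul_eq_sum_sum, factorWeights, mul_sum]
          refine sum_congr rfl fun m _ => ?_
          simp only [sum_range_succ, sum_range_zero, Nat.mul_add_div (by norm_num : 0 < 4)]
          norm_num
          ring
  · have hwidth : P.toNet.width (P.depth + 1) = 1 := P.width_L_toNet
    have hA : P.toNet.A (P.depth + 1) 0 = lift P.depth P.out.1 := by ext j; simp [toNet]
    rw [card_filter_ne_zero_product, hwidth, sum_range_one]
    exact add_le_add (hA ▸ P.nnz_lift_le le_rfl _) ((card_filter_le _ _).trans (by simp))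

end ProdNet

namespace Finsupp

variable {σ : Type*}

/-- The product layer in which `x ^ α` is formed. -/
def level (α : σ →₀ ℕ) : ℕ := Nat.clog 2 α.degree

def firstHalf (α : σ →₀ ℕ) : σ →₀ ℕ :=
  (α.exists_le_degree_eq ((α.degree + 1) / 2) (by omega)).choose

def secondHalf (α : σ →₀ ℕ) : σ →₀ ℕ := α - α.firstHalf

variable (α : σ →₀ ℕ)

lemma firstHalf_le : α.firstHalf ≤ α :=
  (α.exists_le_degree_eq ((α.degree + 1) / 2) (by omega)).choose_spec.1

lemma degree_firstHalf : α.firstHalf.degree = (α.degree + 1) / 2 :=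
  (α.exists_le_degree_eq ((α.degree + 1) / 2) (by omega)).choose_spec.2

lemma secondHalf_le : α.secondHalf ≤ α := tsub_le_self

lemma firstHalf_add_secondHalf : α.firstHalf + α.secondHalf = α :=
  add_tsub_cancel_of_le α.firstHalf_le

lemma degree_secondHalf : α.secondHalf.degree = α.degree / 2 := by
  have h := congrArg degree α.firstHalf_add_secondHalf
  rw [map_add, degree_firstHalf] at h
  omega

lemma level_le_degree : α.level ≤ α.degree :=
  (Nat.clog_le_iff_le_pow one_lt_two).mpr Nat.lt_two_pow_self.le

lemma two_le_degree_of_level_ne_zero (h : α.level ≠ 0) : 2 ≤ α.degree := by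
  by_contra! h'
  exact h (Nat.clog_of_right_le_one (by omega) 2)

lemma exists_eq_single_of_level_eq_zero (h : α.level = 0) (h0 : α ≠ 0) :
    ∃ i, α = single i 1 := by
  have hdeg : α.degree = 1 := by
    have hpos : α.degree ≠ 0 := fun h' => h0 ((degree_eq_zero_iff α).mp h')
    by_contra h1
    exact (Nat.clog_pos one_lt_two (by omega)).ne' h
  have hmem : α ∈ Set.range fun i => single i 1 := by rw [range_single_one]; exact hdeg
  obtain ⟨i, hi⟩ := hmem
  exact ⟨i, hi.symm⟩

variable {α}

lemma level_firstHalf (h : 2 ≤ α.degree) : α.firstHalf.level + 1 = α.level := by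
  rw [level, level, degree_firstHalf, Nat.clog_of_two_le one_lt_two h]
  rfl

lemma level_secondHalf (h : 2 ≤ α.degree) :
    α.secondHalf.level + 1 = α.level ∨ α.secondHalf.level + 2 = α.level := by
  have hle : α.secondHalf.level + 1 ≤ α.level := by
    rw [← level_firstHalf h]
    exact Nat.add_le_add_right (Nat.clog_mono_right 2 (by
      rw [degree_firstHalf, degree_secondHalf]; omega)) 1
  have hge : α.level ≤ α.secondHalf.level + 2 := by
    rw [level, Nat.clog_le_iff_le_pow one_lt_two, pow_add, level, degree_secondHalf]
    have := Nat.le_pow_clog one_lt_two (α.degree / 2)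
    omega
  omega

end Finsupp

lemma sum_lt_two_pow_sum_log_succ {ι : Type*} (s : Finset ι) (f : ι → ℕ) :
    ∑ i ∈ s, f i < 2 ^ ∑ i ∈ s, (Nat.log 2 (f i) + 1) := by
  induction s using Finset.induction with
  | empty => simp
  | insert a s ha ih =>
    rw [sum_insert ha, sum_insert ha, pow_add]
    have ha' : f a < 2 ^ (Nat.log 2 (f a) + 1) := Nat.lt_pow_succ_log_self one_lt_two (f a)
    calc f a + ∑ i ∈ s, f i < (f a + 1) * (∑ i ∈ s, f i + 1) := by rw [add_mul, mul_add]; omega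
      _ ≤ _ := Nat.mul_le_mul ha' ih

namespace PolyNet

variable {d : ℕ} (Λ : Finset (Fin d →₀ ℕ)) (p : MvPolynomial (Fin d) ℝ) (x : ℕ → ℝ)

def monomialValue (α : Fin d →₀ ℕ) : ℝ := ∏ i : Fin d, x i ^ α i

lemma monomialValue_add (α β : Fin d →₀ ℕ) :
    monomialValue x (α + β) = monomialValue x α * monomialValue x β := by
  simp only [monomialValue, Finsupp.coe_add, Pi.add_apply, pow_add, prod_mul_distrib]

lemma monomialValue_single (i : Fin d) : monomialValue x (Finsupp.single i 1) = x i := by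
  rw [monomialValue, prod_eq_single i (fun j _ hj => by simp [Finsupp.single_eq_of_ne hj])
    (by simp)]
  simp

lemma eval_eq_sum_monomialValue (hp : p.support ⊆ Λ) :
    MvPolynomial.eval (fun i : Fin d => x i) p = ∑ α ∈ Λ, p.coeff α * monomialValue x α :=
  (MvPolynomial.eval_eq' _ p).trans <| sum_subset hp fun α _ hα => by
    rw [MvPolynomial.notMem_support_iff.mp hα, zero_mul]

def levelSet (ℓ : ℕ) : Finset (Fin d →₀ ℕ) := {α ∈ Λ | α.level = ℓ}

/-- Monomials formed one layer earlier are relayed, since the second half of a monomial of the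
next level may have lower level. -/
def layer (ℓ : ℕ) : Finset (Fin d →₀ ℕ) := {α ∈ Λ | α ≠ 0 ∧ (α.level = ℓ ∨ α.level + 1 = ℓ)}

def monomialAt (ℓ m : ℕ) : Fin d →₀ ℕ :=
  if h : m < #(layer Λ ℓ) then ((layer Λ ℓ).equivFin.symm ⟨m, h⟩ : Fin d →₀ ℕ) else 0

/-- In the input layer, `x ^ single i 1` is the coordinate `i`. -/
def neuronIndex (ℓ : ℕ) (β : Fin d →₀ ℕ) : ℕ :=
  if ℓ = 0 then Finsupp.weight (fun i : Fin d => (i : ℕ)) β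
  else if h : β ∈ layer Λ ℓ then (layer Λ ℓ).equivFin ⟨β, h⟩ else 0

def monomialForm (ℓ : ℕ) (β : Fin d →₀ ℕ) : (ℕ → ℝ) × ℝ :=
  if β = 0 then (0, 1) else (Pi.single (neuronIndex Λ ℓ β) 1, 0)

def factors (ℓ : ℕ) (β : Fin d →₀ ℕ) : (Fin d →₀ ℕ) × (Fin d →₀ ℕ) :=
  if β.level = ℓ + 1 then (β.firstHalf, β.secondHalf) else (β, 0)

/-- The last neuron of each hidden layer accumulates the terms of `p` of lower level. -/
def carryForm (ℓ : ℕ) : (ℕ → ℝ) × ℝ := if ℓ = 0 then 0 else (Pi.single #(layer Λ ℓ) 1, 0)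

def accumulatorForm (ℓ : ℕ) : (ℕ → ℝ) × ℝ :=
  carryForm Λ ℓ + ∑ β ∈ levelSet Λ ℓ, p.coeff β • monomialForm Λ ℓ β

def partialSum (ℓ : ℕ) : ℝ := ∑ α ∈ Λ with α.level < ℓ, p.coeff α * monomialValue x α

def depth : ℕ := max 1 (Λ.sup Finsupp.level)

def prodNet : ProdNet where
  depth := depth Λ
  width ℓ := if ℓ = 0 then d else #(layer Λ ℓ) + 1
  left ℓ m :=
    if m < #(layer Λ (ℓ + 1)) then monomialForm Λ ℓ (factors ℓ (monomialAt Λ (ℓ + 1) m)).1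
    else accumulatorForm Λ p ℓ
  right ℓ m :=
    if m < #(layer Λ (ℓ + 1)) then monomialForm Λ ℓ (factors ℓ (monomialAt Λ (ℓ + 1) m)).2
    else (0, 1)
  out := accumulatorForm Λ p (depth Λ)

lemma depth_prodNet : (prodNet Λ p).depth = depth Λ := rfl

lemma out_prodNet : (prodNet Λ p).out = accumulatorForm Λ p (depth Λ) := rfl

lemma width_prodNet_succ (k : ℕ) : (prodNet Λ p).width (k + 1) = #(layer Λ (k + 1)) + 1 := rfl

variable {Λ}

lemma neuronIndex_lt {ℓ : ℕ} (hℓ : ℓ ≠ 0) {β : Fin d →₀ ℕ} (h : β ∈ layer Λ ℓ) :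
    neuronIndex Λ ℓ β < #(layer Λ ℓ) := by
  simp [neuronIndex, hℓ, h]

lemma monomialAt_neuronIndex {ℓ : ℕ} (hℓ : ℓ ≠ 0) {β : Fin d →₀ ℕ} (h : β ∈ layer Λ ℓ) :
    monomialAt Λ ℓ (neuronIndex Λ ℓ β) = β := by
  simp [monomialAt, neuronIndex, hℓ, h]

lemma exists_eq_single_of_mem_layer_zero {β : Fin d →₀ ℕ} (h : β ∈ layer Λ 0) :
    ∃ i, β = Finsupp.single i 1 ∧ neuronIndex Λ 0 β = i := by
  simp only [layer, mem_filter, Nat.add_eq_zero_iff, one_ne_zero, and_false, or_false] at h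
  obtain ⟨i, rfl⟩ := β.exists_eq_single_of_level_eq_zero h.2.2 h.2.1
  exact ⟨i, rfl, by simp [neuronIndex, Finsupp.weight_single]⟩

lemma eq_zero_or_mem_layer_of_mem_levelSet {ℓ : ℕ} {β : Fin d →₀ ℕ} (h : β ∈ levelSet Λ ℓ) :
    β = 0 ∨ β ∈ layer Λ ℓ := by
  simp only [levelSet, layer, mem_filter] at h ⊢
  tauto

lemma factors_fst_add_snd (ℓ : ℕ) (β : Fin d →₀ ℕ) : (factors ℓ β).1 + (factors ℓ β).2 = β := by
  unfold factors; split_ifs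
  · exact β.firstHalf_add_secondHalf
  · exact add_zero β

lemma factors_fst_mem (hΛ : IsLowerSet (Λ : Set (Fin d →₀ ℕ))) {ℓ : ℕ} {β : Fin d →₀ ℕ}
    (h : β ∈ layer Λ (ℓ + 1)) :
    (factors ℓ β).1 ∈ layer Λ ℓ := by
  simp only [layer, mem_filter] at h ⊢
  unfold factors; split_ifs with hβ <;> dsimp only
  · have h2 := β.two_le_degree_of_level_ne_zero (by omega)
    refine ⟨hΛ β.firstHalf_le h.1, fun h0 => ?_, Or.inl (by have := β.level_firstHalf h2; omega)⟩
    have := congrArg Finsupp.degree h0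
    rw [β.degree_firstHalf, map_zero] at this
    omega
  · exact ⟨h.1, h.2.1, Or.inl (by omega)⟩

lemma factors_snd_mem (hΛ : IsLowerSet (Λ : Set (Fin d →₀ ℕ))) {ℓ : ℕ} {β : Fin d →₀ ℕ}
    (h : β ∈ layer Λ (ℓ + 1)) :
    (factors ℓ β).2 = 0 ∨ (factors ℓ β).2 ∈ layer Λ ℓ := by
  simp only [layer, mem_filter] at h ⊢
  unfold factors; split_ifs with hβ <;> dsimp only
  · have h2 := β.two_le_degree_of_level_ne_zero (by omega)
    refine Or.inr ⟨hΛ β.secondHalf_le h.1, fun h0 => ?_, ?_⟩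
    · have := congrArg Finsupp.degree h0
      rw [β.degree_secondHalf, map_zero] at this
      omega
    · have := β.level_secondHalf h2; omega
  · exact Or.inl rfl

variable (Λ)

lemma partialSum_succ (ℓ : ℕ) :
    partialSum Λ p x (ℓ + 1) =
      partialSum Λ p x ℓ + ∑ β ∈ levelSet Λ ℓ, p.coeff β * monomialValue x β := by
  simp only [partialSum, levelSet, Nat.lt_succ_iff_lt_or_eq, filter_or]
  exact sum_union (disjoint_filter.2 fun _ _ h h' => by omega)

def HoldsLayer (ℓ n : ℕ) (v : ℕ → ℝ) : Prop :=
  ∀ β ∈ layer Λ ℓ, neuronIndex Λ ℓ β < n ∧ v (neuronIndex Λ ℓ β) = monomialValue x β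

variable {Λ p x}

lemma affEval_monomialForm {ℓ n : ℕ} {v : ℕ → ℝ} (hv : HoldsLayer Λ x ℓ n v)
    {β : Fin d →₀ ℕ} (hβ : β = 0 ∨ β ∈ layer Λ ℓ) :
    affEval n v (monomialForm Λ ℓ β) = monomialValue x β := by
  rcases hβ with rfl | hβ
  · simp [monomialForm, affEval_const, monomialValue]
  · have hne : β ≠ 0 := (mem_filter.mp hβ).2.1
    rw [monomialForm, if_neg hne, affEval_single (hv β hβ).1, (hv β hβ).2]

lemma affEval_accumulatorForm {ℓ n : ℕ} {v : ℕ → ℝ} (hv : HoldsLayer Λ x ℓ n v)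
    (hcarry : affEval n v (carryForm Λ ℓ) = partialSum Λ p x ℓ) :
    affEval n v (accumulatorForm Λ p ℓ) = partialSum Λ p x (ℓ + 1) := by
  rw [accumulatorForm, map_add, map_sum, hcarry, partialSum_succ]
  refine congrArg _ (sum_congr rfl fun β hβ => ?_)
  rw [map_smul, smul_eq_mul,
    affEval_monomialForm hv (eq_zero_or_mem_layer_of_mem_levelSet hβ)]

lemma val_prodNet (hΛ : IsLowerSet (Λ : Set (Fin d →₀ ℕ))) (ℓ : ℕ) :
    HoldsLayer Λ x ℓ ((prodNet Λ p).width ℓ) ((prodNet Λ p).val x ℓ) ∧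
    affEval ((prodNet Λ p).width ℓ) ((prodNet Λ p).val x ℓ) (carryForm Λ ℓ) =
      partialSum Λ p x ℓ := by
  induction ℓ with
  | zero =>
    refine ⟨fun β hβ => ?_, by simp [carryForm, partialSum]⟩
    obtain ⟨i, rfl, hi⟩ := exists_eq_single_of_mem_layer_zero hβ
    rw [hi, monomialValue_single]
    exact ⟨i.isLt, rfl⟩
  | succ ℓ ih =>
    obtain ⟨hv, hcarry⟩ := ih
    refine ⟨fun β hβ => ?_, ?_⟩
    · have hlt := neuronIndex_lt ℓ.add_one_ne_zero hβ
      refine ⟨(width_prodNet_succ Λ p ℓ).symm ▸ Nat.lt_succ_of_lt hlt, ?_⟩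
      rw [ProdNet.val_succ, show (prodNet Λ p).left ℓ _ = _ from if_pos hlt,
        show (prodNet Λ p).right ℓ _ = _ from if_pos hlt,
        monomialAt_neuronIndex ℓ.add_one_ne_zero hβ,
        affEval_monomialForm hv (Or.inr (factors_fst_mem hΛ hβ)),
        affEval_monomialForm hv (factors_snd_mem hΛ hβ), ← monomialValue_add, factors_fst_add_snd]
    · rw [carryForm, if_neg ℓ.add_one_ne_zero, width_prodNet_succ,
        affEval_single (Nat.lt_succ_self _), ProdNet.val_succ,
        show (prodNet Λ p).left ℓ _ = _ from if_neg (lt_irrefl _),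
        show (prodNet Λ p).right ℓ _ = _ from if_neg (lt_irrefl _),
        affEval_accumulatorForm hv hcarry, affEval_const, mul_one]

lemma res_prodNet (hΛ : IsLowerSet (Λ : Set (Fin d →₀ ℕ))) (hp : p.support ⊆ Λ) :
    (prodNet Λ p).res x = MvPolynomial.eval (fun i : Fin d => x i) p := by
  obtain ⟨hv, hcarry⟩ := val_prodNet (p := p) (x := x) hΛ (depth Λ)
  rw [ProdNet.res, out_prodNet, depth_prodNet, affEval_accumulatorForm hv hcarry, partialSum,
    eval_eq_sum_monomialValue Λ p x hp]
  refine sum_congr (filter_true_of_mem fun α hα => ?_) fun _ _ => rfl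
  exact Nat.lt_succ_of_le ((le_sup hα).trans (le_max_right _ _))

lemma degree_lt_card (hΛ : IsLowerSet (Λ : Set (Fin d →₀ ℕ))) {α : Fin d →₀ ℕ}
    (hα : α ∈ Λ) : α.degree < #Λ := by
  have hsub : range (α.degree + 1) ⊆ Λ.image Finsupp.degree := fun k hk => by
    obtain ⟨β, hβ, rfl⟩ := α.exists_le_degree_eq k (Nat.lt_succ_iff.mp (mem_range.mp hk))
    exact mem_image_of_mem _ (hΛ hβ hα)
  simpa using (card_le_card hsub).trans card_image_le

lemma depth_le_card (hne : Λ.Nonempty) (hΛ : IsLowerSet (Λ : Set (Fin d →₀ ℕ))) :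
    depth Λ ≤ #Λ :=
  max_le hne.card_pos <| Finset.sup_le fun α hα =>
    α.level_le_degree.trans (degree_lt_card hΛ hα).le

variable (Λ p)

lemma depth_le_sum_log (hd : 1 ≤ d) :
    depth Λ ≤ ∑ i : Fin d, Nat.log 2 (Λ.sup fun α => α i) + d := by
  refine max_le (by omega) <| Finset.sup_le fun α hα => ?_
  have hdeg : α.degree ≤ ∑ i : Fin d, Λ.sup fun α => α i := by
    rw [Finsupp.degree_eq_sum]
    exact sum_le_sum fun i _ => le_sup (f := fun α : Fin d →₀ ℕ => α i) hα
  have hlt := sum_lt_two_pow_sum_log_succ (univ : Finset (Fin d)) fun i => Λ.sup fun α => α i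
  rw [sum_add_distrib, sum_const, card_univ, Fintype.card_fin, smul_eq_mul, mul_one] at hlt
  exact (Nat.clog_le_iff_le_pow one_lt_two).mpr (hdeg.trans hlt.le)

lemma sum_card_levelSet_le (n : ℕ) : ∑ k ∈ range n, #(levelSet Λ k) ≤ #Λ := by
  simp only [levelSet, sum_card_fiberwise_eq_card_filter]
  exact card_filter_le _ _

lemma card_layer_succ_le (k : ℕ) : #(layer Λ (k + 1)) ≤ #(levelSet Λ (k + 1)) + #(levelSet Λ k) :=
  (card_le_card fun α hα => by
    simp only [layer, levelSet, mem_filter, mem_union] at hα ⊢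
    obtain ⟨hα, -, h | h⟩ := hα
    exacts [Or.inl ⟨hα, h⟩, Or.inr ⟨hα, by omega⟩]).trans (card_union_le _ _)

lemma sum_card_layer_le (n : ℕ) : ∑ k ∈ range n, #(layer Λ (k + 1)) ≤ 2 * #Λ := by
  have h1 := sum_card_levelSet_le Λ (n + 1)
  have h2 := sum_card_levelSet_le Λ n
  rw [sum_range_succ'] at h1
  have := sum_le_sum fun k (_ : k ∈ range n) => card_layer_succ_le Λ k
  rw [sum_add_distrib] at this
  omega

lemma nnz_monomialForm_le (n ℓ : ℕ) (β : Fin d →₀ ℕ) : nnz n (monomialForm Λ ℓ β).1 ≤ 1 := by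
  unfold monomialForm; split_ifs
  · simp [nnz]
  · exact nnz_single_le _ _ _

lemma nnz_accumulatorForm_le (n ℓ : ℕ) : nnz n (accumulatorForm Λ p ℓ).1 ≤ 1 + #(levelSet Λ ℓ) := by
  rw [accumulatorForm, Prod.fst_add, Prod.fst_sum]
  refine (nnz_add_le _ _ _).trans (add_le_add ?_ ?_)
  · unfold carryForm; split_ifs
    · simp [nnz]
    · exact nnz_single_le _ _ _
  · refine (nnz_sum_le _ _ _).trans ?_
    rw [card_eq_sum_ones]
    exact sum_le_sum fun β _ => (nnz_smul_le _ _ _).trans (nnz_monomialForm_le Λ _ _ _)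

lemma factorWeights_prodNet_le (k : ℕ) :
    (prodNet Λ p).factorWeights k ≤ 2 * #(layer Λ (k + 1)) + 2 + #(levelSet Λ k) := by
  rw [ProdNet.factorWeights, width_prodNet_succ, sum_range_succ]
  have hrow : ∀ m ∈ range #(layer Λ (k + 1)),
      nnz ((prodNet Λ p).width k) ((prodNet Λ p).left k m).1 +
        nnz ((prodNet Λ p).width k) ((prodNet Λ p).right k m).1 ≤ 2 := fun m hm => by
    rw [show (prodNet Λ p).left k m = _ from if_pos (mem_range.mp hm),
      show (prodNet Λ p).right k m = _ from if_pos (mem_range.mp hm)]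
    exact add_le_add (nnz_monomialForm_le Λ _ _ _) (nnz_monomialForm_le Λ _ _ _)
  rw [show (prodNet Λ p).left k _ = _ from if_neg (lt_irrefl _),
    show (prodNet Λ p).right k _ = _ from if_neg (lt_irrefl _)]
  have hacc := nnz_accumulatorForm_le Λ p ((prodNet Λ p).width k) k
  have hconst : nnz ((prodNet Λ p).width k) ((0, 1) : (ℕ → ℝ) × ℝ).1 = 0 := by simp [nnz]
  have hsum := sum_le_sum hrow
  rw [sum_const, card_range, smul_eq_mul] at hsum
  omega

lemma neurons_toNet_prodNet_le (hne : Λ.Nonempty)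
    (hΛ : IsLowerSet (Λ : Set (Fin d →₀ ℕ))) :
    (prodNet Λ p).toNet.neurons ≤ 12 * #Λ := by
  have hsum : ∑ k ∈ range (depth Λ), 4 * (prodNet Λ p).width (k + 1) =
      4 * ∑ k ∈ range (depth Λ), #(layer Λ (k + 1)) + 4 * depth Λ := by
    simp only [width_prodNet_succ, mul_add, sum_add_distrib, mul_sum, sum_const, card_range,
      smul_eq_mul, mul_one]
    ring
  have := sum_card_layer_le Λ (depth Λ)
  have := depth_le_card hne hΛ
  rw [ProdNet.neurons_toNet, depth_prodNet, hsum]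
  omega

lemma nonzeroWeights_toNet_prodNet_le (hne : Λ.Nonempty)
    (hΛ : IsLowerSet (Λ : Set (Fin d →₀ ℕ))) :
    (prodNet Λ p).toNet.nonzeroWeights ≤ 133 * #Λ := by
  have hlayers : ∑ k ∈ range (depth Λ),
      (16 * (prodNet Λ p).factorWeights k + 4 * (prodNet Λ p).width (k + 1)) ≤
        36 * ∑ k ∈ range (depth Λ), #(layer Λ (k + 1)) +
          16 * ∑ k ∈ range (depth Λ), #(levelSet Λ k) + 36 * depth Λ := by
    calc _ ≤ ∑ k ∈ range (depth Λ), (36 * #(layer Λ (k + 1)) + 16 * #(levelSet Λ k) + 36) :=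
          sum_le_sum fun k _ => by
            have := factorWeights_prodNet_le Λ p k
            rw [width_prodNet_succ]
            omega
      _ = _ := by simp only [sum_add_distrib, ← mul_sum, sum_const, card_range, smul_eq_mul]; ring
  have hout := nnz_accumulatorForm_le Λ p ((prodNet Λ p).width (depth Λ)) (depth Λ)
  have : #(levelSet Λ (depth Λ)) ≤ #Λ := card_filter_le _ _
  have := sum_card_layer_le Λ (depth Λ)
  have := sum_card_levelSet_le Λ (depth Λ)
  have := depth_le_card hne hΛ
  have := hne.card_pos
  refine ((prodNet Λ p).nonzeroWeights_toNet_le).trans ?_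
  rw [depth_prodNet, out_prodNet]
  omega

end PolyNet

/-- any polynomial in a downward closed polynomial space `P_Λ` is realized by
a σ₂-network with at most `∑ᵢ ⌊log₂ Nᵢ⌋ + d` hidden layers and `O(|Λ|)` neurons and
nonzero weights, where `Nᵢ = max_{α ∈ Λ} αᵢ`. -/
theorem stmt_8 :
    ∃ C : ℕ, 0 < C ∧
      ∀ d : ℕ, 1 ≤ d →
        ∀ Λ : Finset (Fin d →₀ ℕ), Λ.Nonempty →
          (∀ α ∈ Λ, ∀ β : Fin d →₀ ℕ, β ≤ α → β ∈ Λ) →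
          ∀ p : MvPolynomial (Fin d) ℝ, p.support ⊆ Λ →
            ∃ Φ : Net,
              1 ≤ Φ.L ∧
              Φ.width 0 = d ∧
              Φ.width Φ.L = 1 ∧
              Φ.hiddenLayers ≤ (∑ i : Fin d, Nat.log 2 (Λ.sup (fun α => α i))) + d ∧
              Φ.neurons ≤ C * Λ.card ∧
              Φ.nonzeroWeights ≤ C * Λ.card ∧
              ∀ x : ℕ → ℝ, Φ.realize (repu 2) x 0 =
                MvPolynomial.eval (fun i : Fin d => x i) p := by
  refine ⟨133, by norm_num, fun d hd Λ hne hΛ p hp => ?_⟩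
  have hlower : IsLowerSet (Λ : Set (Fin d →₀ ℕ)) := fun α β hβ hα => hΛ α hα β hβ
  let P := PolyNet.prodNet Λ p
  refine ⟨P.toNet, Nat.succ_pos _, P.width_zero_toNet, P.width_L_toNet, ?_,
    (PolyNet.neurons_toNet_prodNet_le Λ p hne hlower).trans (by omega),
    PolyNet.nonzeroWeights_toNet_prodNet_le Λ p hne hlower, fun x => ?_⟩
  · rw [P.hiddenLayers_toNet]
    exact PolyNet.depth_le_sum_log Λ hd
  · rw [P.realize_toNet, PolyNet.res_prodNet hlower hp]
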